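/- arXiv:1411.2544 — 2 statements merged into one kernel-verified Lean document; each statement's English description precedes it below -/
import Mathlib

section
/- For n ≥ 2, the Randić energy of the friendship graph F_n equals n + 1. -/
open scoped Classical
open Polynomial

/-- The Randić matrix of a simple graph: entry `1/√(dᵢ dⱼ)` for adjacent
vertices `vᵢ ∼ vⱼ` and `0` otherwise. -/
noncomputable def randicMatrix {V : Type*} [Fintype V] (G : SimpleGraph V) : Matrix V V ℝ :=
  fun i j => if G.Adj i j then 1 / Real.sqrt ((G.degree i : ℝ) * (G.degree j : ℝ)) else 0

/-- The Randić energy: the sum of the absolute values of the eigenvalues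
of the Randić matrix. -/
noncomputable def randicEnergy {V : Type*} [Fintype V] [DecidableEq V] (G : SimpleGraph V) : ℝ :=
  if h : (randicMatrix G).IsHermitian then ∑ i, |h.eigenvalues i| else 0

/-- The friendship graph `F n`: `n` triangles sharing the common vertex `none`. -/
def friendshipGraph (n : ℕ) : SimpleGraph (Option (Fin n × Fin 2)) where
  Adj x y := (x = none ∧ y ≠ none) ∨ (y = none ∧ x ≠ none) ∨
    (∃ i a b, a ≠ b ∧ x = some (i, a) ∧ y = some (i, b))
  symm := by
    refine ⟨?_⟩; rintro x y (⟨h1, h2⟩ | ⟨h1, h2⟩ | ⟨i, a, b, hab, hx, hy⟩)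
    · exact Or.inr (Or.inl ⟨h1, h2⟩)
    · exact Or.inl ⟨h1, h2⟩
    · exact Or.inr (Or.inr ⟨i, b, a, hab.symm, hy, hx⟩)
  loopless := by
    refine ⟨?_⟩; rintro x (⟨h1, h2⟩ | ⟨h1, h2⟩ | ⟨i, a, b, hab, hx, hy⟩)
    · exact h2 h1
    · exact h2 h1
    · rw [hx] at hy; simp at hy; exact hab hy


/-
The vector `√d` of square roots of degrees is fixed by the Randić matrix `R` of any graph. For
`F_n`, counting common neighbours weighted by inverse degree gives `R² = 1/4 + (8n)⁻¹ √d √dᵀ`, so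
`(R - 1)(R² - 1/4) = 0` and every eigenvalue is `1` or `±1/2`. On these three values
`|λ| = (2λ² + 1)/3`, so the energy is `(2 tr R² + 2n + 1)/3`, and `tr R² = (n + 2)/2`.
-/

open Matrix

theorem abs_eq_of_mul_sq_sub_eq_zero {t : ℝ} (h : (t - 1) * (t ^ 2 - 1 / 4) = 0) :
    |t| = (2 * t ^ 2 + 1) / 3 := by
  have : (t - 1) * ((t - 1 / 2) * (t + 1 / 2)) = 0 := by linear_combination h
  rcases mul_eq_zero.1 this with h1 | h2
  · rw [sub_eq_zero.1 h1]; norm_num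
  rcases mul_eq_zero.1 h2 with h2 | h2
  · rw [sub_eq_zero.1 h2]; norm_num
  · rw [eq_neg_of_add_eq_zero_left h2]; norm_num

namespace Matrix.IsHermitian

variable {ι : Type*} [Fintype ι] [DecidableEq ι] {A : Matrix ι ι ℝ}

theorem trace_mul_self (hA : A.IsHermitian) : (A * A).trace = ∑ i, hA.eigenvalues i ^ 2 := by
  rw [← sq, ← cfc_pow_id (R := ℝ) A 2 hA.isSelfAdjoint, cfc_eq hA, IsHermitian.cfc,
    Unitary.conjStarAlgAut_apply, trace_mul_cycle, Unitary.coe_star_mul_self, one_mul,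
    trace_diagonal]
  rfl

theorem eval_eigenvalues_eq_zero (hA : A.IsHermitian) {p : ℝ[X]} (hp : aeval A p = 0) (i : ι) :
    p.eval (hA.eigenvalues i) = 0 := by
  have : Nonempty ι := ⟨i⟩
  simpa [hp, spectrum.zero_eq] using
    spectrum.subset_polynomial_aeval A p ⟨_, hA.eigenvalues_mem_spectrum_real i, rfl⟩

theorem sum_abs_eigenvalues_eq_of_aeval_eq_zero (hA : A.IsHermitian)
    (hp : aeval A ((X - 1) * (X ^ 2 - C (1 / 4 : ℝ))) = 0) :
    ∑ i, |hA.eigenvalues i| = (2 * (A * A).trace + Fintype.card ι) / 3 := by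
  have habs : ∀ i, |hA.eigenvalues i| = (2 * hA.eigenvalues i ^ 2 + 1) / 3 := fun i =>
    abs_eq_of_mul_sq_sub_eq_zero (by simpa using hA.eval_eigenvalues_eq_zero hp i)
  simp only [habs, ← Finset.sum_div, Finset.sum_add_distrib, ← Finset.mul_sum, hA.trace_mul_self,
    Finset.sum_const, Finset.card_univ, nsmul_eq_mul, mul_one]

end Matrix.IsHermitian

namespace SimpleGraph

variable {V : Type*} [Fintype V] (G : SimpleGraph V)

theorem isHermitian_randicMatrix : (randicMatrix G).IsHermitian := by
  ext i j
  simp [randicMatrix, G.adj_comm, mul_comm]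

theorem randicMatrix_mulVec_sqrt_degree :
    randicMatrix G *ᵥ (fun v => √(G.degree v : ℝ)) = fun v => √(G.degree v : ℝ) := by
  ext v
  have hterm : ∀ w ∈ G.neighborFinset v,
      1 / √((G.degree v : ℝ) * G.degree w) * √(G.degree w : ℝ) = (√(G.degree v : ℝ))⁻¹ := by
    intro w hw
    have : 0 < (G.degree w : ℝ) := by
      exact_mod_cast ((G.mem_neighborFinset v w).1 hw).degree_pos_right
    rw [Real.sqrt_mul (Nat.cast_nonneg _)]
    field_simp
  simp only [mulVec, dotProduct, randicMatrix, ite_mul, zero_mul]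
  rw [Finset.sum_ite, Finset.sum_const_zero, add_zero, ← neighborFinset_eq_filter,
    Finset.sum_congr rfl hterm, Finset.sum_const, nsmul_eq_mul, card_neighborFinset_eq_degree,
    ← div_eq_mul_inv, Real.div_sqrt]

theorem randicMatrix_mul_self_apply (x y : V) :
    (randicMatrix G * randicMatrix G) x y =
      (∑ z, if G.Adj x z ∧ G.Adj z y then (G.degree z : ℝ)⁻¹ else 0) /
        (√(G.degree x : ℝ) * √(G.degree y : ℝ)) := by
  rw [mul_apply, Finset.sum_div]
  refine Finset.sum_congr rfl fun z _ => ?_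
  by_cases h : G.Adj x z ∧ G.Adj z y
  · have : 0 < (G.degree z : ℝ) := by exact_mod_cast h.1.degree_pos_right
    simp only [randicMatrix, if_pos h, if_pos h.1, if_pos h.2]
    rw [Real.sqrt_mul (Nat.cast_nonneg _), Real.sqrt_mul (Nat.cast_nonneg _)]
    field_simp
    rw [Real.sq_sqrt this.le]
  · rw [if_neg h, zero_div]
    unfold randicMatrix
    split_ifs <;> simp_all

variable [DecidableEq V]

theorem randicMatrix_mul_self_eq_of_sum_common_neighbors (hdeg : ∀ v, 0 < G.degree v) {a b : ℝ}
    (h : ∀ x y, (∑ z, if G.Adj x z ∧ G.Adj z y then (G.degree z : ℝ)⁻¹ else 0) =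
      (if x = y then a * G.degree x else 0) + b * G.degree x * G.degree y) :
    randicMatrix G * randicMatrix G =
      a • 1 + b • vecMulVec (fun v => √(G.degree v : ℝ)) (fun v => √(G.degree v : ℝ)) := by
  ext x y
  rw [randicMatrix_mul_self_apply, h]
  have hx := Real.sq_sqrt (Nat.cast_nonneg (G.degree x) : (0 : ℝ) ≤ _)
  have hy := Real.sq_sqrt (Nat.cast_nonneg (G.degree y) : (0 : ℝ) ≤ _)
  have hx0 : 0 < √(G.degree x : ℝ) := Real.sqrt_pos.2 (by exact_mod_cast hdeg x)
  have hy0 : 0 < √(G.degree y : ℝ) := Real.sqrt_pos.2 (by exact_mod_cast hdeg y)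
  simp only [Matrix.add_apply, Matrix.smul_apply, one_apply, vecMulVec_apply, smul_eq_mul]
  rw [div_eq_iff (mul_pos hx0 hy0).ne']
  split_ifs with hxy
  · subst hxy
    linear_combination -(a + b * (G.degree x + √(G.degree x : ℝ) ^ 2)) * hx
  · linear_combination -b * (G.degree y * hx + √(G.degree x : ℝ) ^ 2 * hy)

theorem aeval_randicMatrix_eq_zero_of_mul_self_eq {a b : ℝ}
    (h : randicMatrix G * randicMatrix G =
      a • 1 + b • vecMulVec (fun v => √(G.degree v : ℝ)) (fun v => √(G.degree v : ℝ))) :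
    aeval (randicMatrix G) ((X - 1) * (X ^ 2 - C a)) = 0 := by
  simp only [map_mul, map_sub, aeval_X, map_one, aeval_C, Algebra.algebraMap_eq_smul_one, sq, h,
    add_sub_cancel_left, mul_smul_comm, mul_vecMulVec, sub_mulVec, one_mulVec,
    randicMatrix_mulVec_sqrt_degree, sub_self, zero_vecMulVec, smul_zero]

end SimpleGraph

section FriendshipGraph

variable {n : ℕ}

@[simp] theorem friendshipGraph_adj_none_some (p : Fin n × Fin 2) :
    (friendshipGraph n).Adj none (some p) :=
  Or.inl ⟨rfl, Option.some_ne_none p⟩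

@[simp] theorem friendshipGraph_adj_some_none (p : Fin n × Fin 2) :
    (friendshipGraph n).Adj (some p) none :=
  (friendshipGraph_adj_none_some p).symm

@[simp] theorem friendshipGraph_adj_some_some {i j : Fin n} {a b : Fin 2} :
    (friendshipGraph n).Adj (some (i, a)) (some (j, b)) ↔ i = j ∧ a ≠ b := by
  simp only [friendshipGraph, reduceCtorEq, false_and, ne_eq, Option.some.injEq, Prod.mk.injEq,
    false_or]
  constructor
  · rintro ⟨k, c, d, hcd, ⟨rfl, rfl⟩, rfl, rfl⟩
    exact ⟨rfl, hcd⟩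
  · rintro ⟨rfl, hab⟩
    exact ⟨i, a, b, hab, ⟨rfl, rfl⟩, rfl, rfl⟩

@[simp] theorem friendshipGraph_degree_none : (friendshipGraph n).degree none = 2 * n := by
  rw [← Nat.cast_id (SimpleGraph.degree _ _), SimpleGraph.degree_eq_sum_if_adj, Fintype.sum_option]
  simp [mul_comm]

@[simp] theorem friendshipGraph_degree_some (p : Fin n × Fin 2) :
    (friendshipGraph n).degree (some p) = 2 := by
  obtain ⟨i, a⟩ := p
  rw [← Nat.cast_id (SimpleGraph.degree _ _), SimpleGraph.degree_eq_sum_if_adj, Fintype.sum_option,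
    Fintype.sum_prod_type]
  fin_cases a <;> simp [Fin.sum_univ_two, ite_and]

theorem friendshipGraph_degree_pos (hn : 0 < n) (v : Option (Fin n × Fin 2)) :
    0 < (friendshipGraph n).degree v := by
  rcases v with _ | p <;> simp [hn]

theorem friendshipGraph_sum_degree : ∑ v, ((friendshipGraph n).degree v : ℝ) = 6 * n := by
  simp only [Fintype.sum_option, friendshipGraph_degree_none, friendshipGraph_degree_some,
    Finset.sum_const, Finset.card_univ, Fintype.card_prod, Fintype.card_fin, nsmul_eq_mul]
  push_cast
  ring

theorem friendshipGraph_sum_common_neighbors (x y : Option (Fin n × Fin 2)) :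
    (∑ z, if (friendshipGraph n).Adj x z ∧ (friendshipGraph n).Adj z y then
      ((friendshipGraph n).degree z : ℝ)⁻¹ else 0) =
    (if x = y then 1 / 4 * ((friendshipGraph n).degree x : ℝ) else 0) +
      (8 * n : ℝ)⁻¹ * (friendshipGraph n).degree x * (friendshipGraph n).degree y := by
  rw [Fintype.sum_option, Fintype.sum_prod_type]
  rcases x with _ | ⟨i, a⟩ <;> rcases y with _ | ⟨j, b⟩
  · rcases n.eq_zero_or_pos with rfl | hn
    · simp
    · simp
      field_simp
      ring
  · have : (n : ℝ) ≠ 0 := by exact_mod_cast j.pos.ne'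
    fin_cases b <;> simp [ite_and] <;> field_simp <;> ring
  · have : (n : ℝ) ≠ 0 := by exact_mod_cast i.pos.ne'
    fin_cases a <;> simp [ite_and] <;> field_simp <;> ring
  · have : (n : ℝ) ≠ 0 := by exact_mod_cast i.pos.ne'
    fin_cases a <;> fin_cases b <;> simp [ite_and] <;> (try split_ifs) <;> field_simp <;> ring

end FriendshipGraph

theorem stmt7 (n : ℕ) (hn : 2 ≤ n) :
    randicEnergy (friendshipGraph n) = n + 1 := by
  set G := friendshipGraph n
  have hsq := G.randicMatrix_mul_self_eq_of_sum_common_neighbors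
    (friendshipGraph_degree_pos (by omega)) friendshipGraph_sum_common_neighbors
  have htrace : (randicMatrix G * randicMatrix G).trace = (n + 2) / 2 := by
    have : (n : ℝ) ≠ 0 := by positivity
    simp only [hsq, trace_add, trace_smul, trace_one, trace_vecMulVec, dotProduct,
      Real.mul_self_sqrt (Nat.cast_nonneg _), G, friendshipGraph_sum_degree, Fintype.card_option,
      Fintype.card_prod, Fintype.card_fin, smul_eq_mul]
    push_cast
    field_simp
    ring
  rw [randicEnergy, dif_pos G.isHermitian_randicMatrix,
    Matrix.IsHermitian.sum_abs_eigenvalues_eq_of_aeval_eq_zero _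
      (G.aeval_randicMatrix_eq_zero_of_mul_self_eq hsq),
    htrace, Fintype.card_option, Fintype.card_prod, Fintype.card_fin, Fintype.card_fin]
  push_cast
  ring
end

section
/- For n ≥ 2, the Randić energy of the Dutch windmill graph D_4^n equals 2 + (n−1)√2. -/
open scoped Classical
open Polynomial

/-- The Dutch windmill graph `D₄ⁿ`: `n` squares sharing the common vertex `none`.
For each `i`, the 4-cycle is `none, (i,0), (i,2), (i,1)`. -/
def dutchWindmillGraph (n : ℕ) : SimpleGraph (Option (Fin n × Fin 3)) where
  Adj x y :=
    (∃ i a, a ≠ 2 ∧ ((x = none ∧ y = some (i, a)) ∨ (y = none ∧ x = some (i, a)))) ∨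
    (∃ i a, a ≠ 2 ∧ ((x = some (i, a) ∧ y = some (i, 2)) ∨ (y = some (i, a) ∧ x = some (i, 2))))
  symm := by
    constructor
    rintro x y (⟨i, a, ha, h | h⟩ | ⟨i, a, ha, h | h⟩)
    · exact Or.inl ⟨i, a, ha, Or.inr h⟩
    · exact Or.inl ⟨i, a, ha, Or.inl h⟩
    · exact Or.inr ⟨i, a, ha, Or.inr h⟩
    · exact Or.inr ⟨i, a, ha, Or.inl h⟩
  loopless := by
    constructor
    rintro x (⟨i, a, ha, ⟨h1, h2⟩ | ⟨h1, h2⟩⟩ | ⟨i, a, ha, ⟨h1, h2⟩ | ⟨h1, h2⟩⟩) <;>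
      first
        | (rw [h1] at h2; simp_all)
        | (rw [h1] at h2; injection h2 with h; exact ha (Prod.mk.injEq .. ▸ h).2)

/-!
The eigen-equations of the Randić matrix `R` of `D₄ⁿ` at the centre, at the far corners `(i, 2)`
and at the two near corners of each square force every eigenvalue `t` to be a root of
`t²(t² - 1)(2t² - 1)`. On these roots `|t| = (2√2 - 1)t² + (2 - 2√2)t⁴`, so the Randić energy
equals `(2√2 - 1) tr R² + (2 - 2√2) tr R⁴`, and the two traces, `n + 1` and `(n + 3)/2`, are read
off the entries of `R` and `R²`.
-/

open Matrix

namespace Matrix.IsHermitian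

variable {𝕜 n : Type*} [RCLike 𝕜] [Fintype n] [DecidableEq n] {A : Matrix n n 𝕜}

lemma trace_pow_eq_sum_eigenvalues_pow (hA : A.IsHermitian) (k : ℕ) :
    (A ^ k).trace = ∑ i, (hA.eigenvalues i : 𝕜) ^ k := by
  conv_lhs => rw [hA.spectral_theorem]
  rw [← map_pow, Unitary.conjStarAlgAut_apply, trace_mul_cycle, Unitary.coe_star_mul_self,
    one_mul, diagonal_pow, trace_diagonal]
  rfl

lemma exists_mulVec_eq_smul_eigenvalues (hA : A.IsHermitian) (i : n) :
    ∃ v ≠ 0, A *ᵥ v = hA.eigenvalues i • v :=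
  ⟨_, fun h => hA.eigenvectorBasis.orthonormal.ne_zero i (by ext j; exact congrFun h j),
    hA.mulVec_eigenvectorBasis i⟩

end Matrix.IsHermitian

lemma SimpleGraph.isHermitian_randicMatrix_s10 {V : Type*} [Fintype V] (G : SimpleGraph V) :
    (randicMatrix G).IsHermitian := by
  ext i j
  simp only [conjTranspose_apply, randicMatrix, star_trivial, G.adj_comm, mul_comm]

lemma randicEnergy_eq_sum_abs_eigenvalues {V : Type*} [Fintype V] [DecidableEq V]
    (G : SimpleGraph V) :
    randicEnergy G = ∑ i, |(SimpleGraph.isHermitian_randicMatrix_s10 G).eigenvalues i| :=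
  dif_pos _

lemma abs_eq_of_sq_mul_sq_sub_one_mul_eq_zero {t : ℝ}
    (ht : t ^ 2 * (t ^ 2 - 1) * (2 * t ^ 2 - 1) = 0) :
    |t| = (2 * √2 - 1) * t ^ 2 + (2 - 2 * √2) * t ^ 4 := by
  rcases mul_eq_zero.mp ht with ht | ht
  · rcases mul_eq_zero.mp ht with ht | ht
    · simp [pow_eq_zero_iff two_ne_zero |>.mp ht]
    · have : |t| = 1 := by rw [← sq_eq_sq₀ (abs_nonneg t) zero_le_one, sq_abs]; linarith
      rw [this, show t ^ 4 = (t ^ 2) ^ 2 by ring, show t ^ 2 = 1 by linarith]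
      ring
  · have : |t| = √2 / 2 := by
      rw [← sq_eq_sq₀ (abs_nonneg t) (by positivity), sq_abs, div_pow,
        Real.sq_sqrt zero_le_two]
      linarith
    rw [this, show t ^ 4 = (t ^ 2) ^ 2 by ring, show t ^ 2 = 1 / 2 by linarith]
    ring

lemma Real.sqrt_two_mul_mul_two (x : ℝ) : √(2 * x * 2) = 2 * √x := by
  rw [show 2 * x * 2 = 2 ^ 2 * x by ring, Real.sqrt_mul (by positivity), Real.sqrt_sq zero_le_two]

namespace dutchWindmillGraph

variable {n : ℕ}

@[simp] lemma adj_none_none : ¬ (dutchWindmillGraph n).Adj none none := by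
  simp [dutchWindmillGraph]

@[simp] lemma adj_none_some {i : Fin n} {a : Fin 3} :
    (dutchWindmillGraph n).Adj none (some (i, a)) ↔ a ≠ 2 := by
  simp [dutchWindmillGraph]

@[simp] lemma adj_some_none {i : Fin n} {a : Fin 3} :
    (dutchWindmillGraph n).Adj (some (i, a)) none ↔ a ≠ 2 := by
  simp [dutchWindmillGraph]

@[simp] lemma adj_some_some {i j : Fin n} {a b : Fin 3} :
    (dutchWindmillGraph n).Adj (some (i, a)) (some (j, b)) ↔ i = j ∧ (a = 2 ↔ b ≠ 2) := by
  simp only [dutchWindmillGraph, Option.some.injEq, Prod.mk.injEq, reduceCtorEq, false_and,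
    and_false, or_false]
  constructor
  · grind
  · rintro ⟨rfl, h⟩
    by_cases ha : a = 2
    · exact Or.inr ⟨i, b, h.mp ha, by grind⟩
    · exact Or.inr ⟨i, a, ha, by grind⟩

lemma degree_none : (dutchWindmillGraph n).degree none = 2 * n := by
  rw [← SimpleGraph.card_neighborFinset_eq_degree, SimpleGraph.neighborFinset_eq_filter,
    Finset.card_filter, Fintype.sum_option, Fintype.sum_prod_type]
  simp only [Fin.sum_univ_three, adj_none_none, adj_none_some, ↓reduceIte, Fin.isValue, ne_eq,
    Fin.reduceEq, not_false_eq_true, Nat.reduceAdd, not_true_eq_false, add_zero, Finset.sum_const,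
    Finset.card_univ, Fintype.card_fin, smul_eq_mul, zero_add]
  ring

lemma degree_some (p : Fin n × Fin 3) : (dutchWindmillGraph n).degree (some p) = 2 := by
  obtain ⟨i, a⟩ := p
  rw [← SimpleGraph.card_neighborFinset_eq_degree, SimpleGraph.neighborFinset_eq_filter,
    Finset.card_filter, Fintype.sum_option, Fintype.sum_prod_type]
  simp only [Fin.sum_univ_three, adj_some_none, adj_some_some]
  fin_cases a <;> simp [Finset.sum_add_distrib]

@[simp] lemma randicMatrix_none_none : randicMatrix (dutchWindmillGraph n) none none = 0 := by
  simp [randicMatrix]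

@[simp] lemma randicMatrix_none_some (i : Fin n) (a : Fin 3) :
    randicMatrix (dutchWindmillGraph n) none (some (i, a)) =
      if a = 2 then 0 else 1 / (2 * √n) := by
  simp only [randicMatrix, adj_none_some, degree_none, degree_some, ite_not]
  push_cast
  rw [Real.sqrt_two_mul_mul_two]

@[simp] lemma randicMatrix_some_none (i : Fin n) (a : Fin 3) :
    randicMatrix (dutchWindmillGraph n) (some (i, a)) none =
      if a = 2 then 0 else 1 / (2 * √n) := by
  rw [← (SimpleGraph.isHermitian_randicMatrix_s10 _).apply, star_trivial, randicMatrix_none_some]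

@[simp] lemma randicMatrix_some_some (i j : Fin n) (a b : Fin 3) :
    randicMatrix (dutchWindmillGraph n) (some (i, a)) (some (j, b)) =
      if i = j ∧ (a = 2 ↔ b ≠ 2) then 1 / 2 else 0 := by
  have : √((2 : ℝ) * 2) = 2 := Real.sqrt_mul_self zero_le_two
  simp only [randicMatrix, adj_some_some, degree_some, Nat.cast_ofNat, this]

lemma randicMatrix_mulVec_none (v : Option (Fin n × Fin 3) → ℝ) :
    (randicMatrix (dutchWindmillGraph n) *ᵥ v) none =
      1 / (2 * √n) * ∑ i, (v (some (i, 0)) + v (some (i, 1))) := by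
  simp [mulVec, dotProduct, Fintype.sum_option, Fintype.sum_prod_type, Fin.sum_univ_three,
    Finset.mul_sum, mul_add]

lemma randicMatrix_mulVec_some_two (v : Option (Fin n × Fin 3) → ℝ) (i : Fin n) :
    (randicMatrix (dutchWindmillGraph n) *ᵥ v) (some (i, 2)) =
      (v (some (i, 0)) + v (some (i, 1))) / 2 := by
  simp only [mulVec, dotProduct, Fin.isValue, Fintype.sum_option, randicMatrix_some_none,
    ↓reduceIte, zero_mul, Fintype.sum_prod_type, randicMatrix_some_some, ne_eq, true_iff, one_div,
    ite_mul, Fin.sum_univ_three, Fin.reduceEq, not_false_eq_true, and_true, not_true_eq_false,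
    and_false, add_zero, Finset.sum_add_distrib, Finset.sum_ite_eq, Finset.mem_univ, zero_add]
  ring

lemma randicMatrix_mulVec_some_of_ne (v : Option (Fin n × Fin 3) → ℝ) (i : Fin n) {a : Fin 3}
    (ha : a ≠ 2) :
    (randicMatrix (dutchWindmillGraph n) *ᵥ v) (some (i, a)) =
      v none / (2 * √n) + v (some (i, 2)) / 2 := by
  simp only [mulVec, dotProduct, Fintype.sum_option, randicMatrix_some_none, Fin.isValue, ha,
    ↓reduceIte, one_div, _root_.mul_inv_rev, Fintype.sum_prod_type, randicMatrix_some_some, ne_eq,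
    false_iff, Decidable.not_not, ite_mul, zero_mul, Fin.sum_univ_three, Fin.reduceEq, and_false,
    add_zero, and_true, zero_add, Finset.sum_ite_eq, Finset.mem_univ]
  ring

lemma mul_apply_zero_add_apply_one_of_mulVec_eq_smul {t : ℝ} {v : Option (Fin n × Fin 3) → ℝ}
    (hv : randicMatrix (dutchWindmillGraph n) *ᵥ v = t • v) (i : Fin n) :
    t * (v (some (i, 0)) + v (some (i, 1))) = v none / √n + v (some (i, 2)) := by
  have h0 := congrFun hv (some (i, 0))
  have h1 := congrFun hv (some (i, 1))
  rw [randicMatrix_mulVec_some_of_ne _ _ (by decide)] at h0 h1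
  simp only [Pi.smul_apply, smul_eq_mul] at h0 h1
  linear_combination -h0 - h1

lemma two_mul_sq_sub_one_mul_apply_two_of_mulVec_eq_smul {t : ℝ}
    {v : Option (Fin n × Fin 3) → ℝ} (hv : randicMatrix (dutchWindmillGraph n) *ᵥ v = t • v)
    (i : Fin n) :
    (2 * t ^ 2 - 1) * v (some (i, 2)) = v none / √n := by
  have h := congrFun hv (some (i, 2))
  rw [randicMatrix_mulVec_some_two] at h
  simp only [Pi.smul_apply, smul_eq_mul] at h
  linear_combination -2 * t * h + mul_apply_zero_add_apply_one_of_mulVec_eq_smul hv i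

lemma sq_mul_apply_none_of_mulVec_eq_smul (hn : 0 < n) {t : ℝ}
    {v : Option (Fin n × Fin 3) → ℝ} (hv : randicMatrix (dutchWindmillGraph n) *ᵥ v = t • v) :
    t ^ 2 * v none = v none / 2 + (∑ i, v (some (i, 2))) / (2 * √n) := by
  have hr : 0 < √n := Real.sqrt_pos.mpr (by exact_mod_cast hn)
  have h := congrFun hv none
  rw [randicMatrix_mulVec_none] at h
  simp only [Pi.smul_apply, smul_eq_mul] at h
  calc t ^ 2 * v none = 1 / (2 * √n) * ∑ i, t * (v (some (i, 0)) + v (some (i, 1))) := by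
        rw [← Finset.mul_sum]; linear_combination -t * h
    _ = v none / 2 + (∑ i, v (some (i, 2))) / (2 * √n) := by
        simp only [mul_apply_zero_add_apply_one_of_mulVec_eq_smul hv, Finset.sum_add_distrib,
          Finset.sum_const, Finset.card_univ, Fintype.card_fin, nsmul_eq_mul]
        field_simp
        linear_combination -v none * Real.sq_sqrt (Nat.cast_nonneg n)

lemma sq_mul_sq_sub_one_mul_eq_zero_of_mulVec_eq_smul (hn : 0 < n) {t : ℝ}
    {v : Option (Fin n × Fin 3) → ℝ} (hv : randicMatrix (dutchWindmillGraph n) *ᵥ v = t • v)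
    (hv0 : v ≠ 0) : t ^ 2 * (t ^ 2 - 1) * (2 * t ^ 2 - 1) = 0 := by
  by_contra h
  simp only [mul_eq_zero, not_or, pow_eq_zero_iff two_ne_zero, sub_eq_zero] at h
  obtain ⟨⟨ht, ht1⟩, ht2⟩ := h
  apply hv0
  have hr : 0 < √n := Real.sqrt_pos.mpr (by exact_mod_cast hn)
  have hfar := two_mul_sq_sub_one_mul_apply_two_of_mulVec_eq_smul hv
  have hsum : (2 * t ^ 2 - 1) * ∑ i, v (some (i, 2)) = √n * v none := by
    rw [Finset.mul_sum, Finset.sum_congr rfl fun i _ => hfar i]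
    simp only [Finset.sum_const, Finset.card_univ, Fintype.card_fin, nsmul_eq_mul]
    field_simp
    linear_combination -v none * Real.sq_sqrt (Nat.cast_nonneg n)
  have hnone := sq_mul_apply_none_of_mulVec_eq_smul hn hv
  have hc : v none = 0 := by
    -- the centre equation times `2t² - 1`, with the summed far-corner equations substituted
    have : t ^ 2 * (t ^ 2 - 1) * v none * √n = 0 := by
      field_simp at hnone
      linear_combination ((2 * t ^ 2 - 1) * hnone + hsum) / 4
    simpa [ht, sub_eq_zero, ht1, hr.ne'] using this
  have hfar0 (i : Fin n) : v (some (i, 2)) = 0 := by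
    simpa [hc, sub_eq_zero, ht2] using hfar i
  have hnear0 (i : Fin n) {a : Fin 3} (ha : a ≠ 2) : v (some (i, a)) = 0 := by
    have h := congrFun hv (some (i, a))
    rw [randicMatrix_mulVec_some_of_ne _ _ ha] at h
    simpa [hc, hfar0, ht, eq_comm] using h
  funext x
  rcases x with _ | ⟨i, a⟩
  · exact hc
  · fin_cases a
    · exact hnear0 i (by decide)
    · exact hnear0 i (by decide)
    · exact hfar0 i

lemma randicMatrix_sq_none_none (hn : 0 < n) :
    (randicMatrix (dutchWindmillGraph n) ^ 2) none none = 1 / 2 := by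
  have hr : 0 < √n := Real.sqrt_pos.mpr (by exact_mod_cast hn)
  simp only [sq, mul_apply, Fintype.sum_option, randicMatrix_none_none, mul_zero,
    Fintype.sum_prod_type, randicMatrix_none_some, Fin.isValue, one_div, _root_.mul_inv_rev,
    randicMatrix_some_none, mul_ite, ite_mul, zero_mul, Fin.sum_univ_three, Fin.reduceEq,
    ↓reduceIte, add_zero, Finset.sum_const, Finset.card_univ, Fintype.card_fin, smul_add,
    nsmul_eq_mul, zero_add]
  field_simp
  linear_combination -2 * Real.sq_sqrt (Nat.cast_nonneg n)

lemma randicMatrix_sq_none_some (j : Fin n) (b : Fin 3) :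
    (randicMatrix (dutchWindmillGraph n) ^ 2) none (some (j, b)) =
      if b = 2 then 1 / (2 * √n) else 0 := by
  fin_cases b <;> simp [sq, mul_apply, Fintype.sum_option, Fintype.sum_prod_type,
    Fin.sum_univ_three, Finset.sum_add_distrib]
  ring

lemma randicMatrix_sq_some_none (i : Fin n) (a : Fin 3) :
    (randicMatrix (dutchWindmillGraph n) ^ 2) (some (i, a)) none =
      if a = 2 then 1 / (2 * √n) else 0 := by
  rw [← ((SimpleGraph.isHermitian_randicMatrix_s10 _).pow 2).apply, star_trivial,
    randicMatrix_sq_none_some]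

lemma randicMatrix_sq_some_some (i j : Fin n) (a b : Fin 3) :
    (randicMatrix (dutchWindmillGraph n) ^ 2) (some (i, a)) (some (j, b)) =
      if a = 2 then (if b = 2 ∧ i = j then 1 / 2 else 0)
      else if b = 2 then 0 else 1 / (4 * n : ℝ) + if i = j then 1 / 4 else 0 := by
  have hk : (√n)⁻¹ * 2⁻¹ * ((√n)⁻¹ * 2⁻¹) = (n : ℝ)⁻¹ * 4⁻¹ := by
    rw [mul_mul_mul_comm, ← mul_inv, Real.mul_self_sqrt (Nat.cast_nonneg n)]
    norm_num
  fin_cases a <;> fin_cases b <;>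
    simp [sq, mul_apply, Fintype.sum_option, Fintype.sum_prod_type, Fin.sum_univ_three,
      Finset.sum_add_distrib, hk]
  all_goals split_ifs <;> norm_num

lemma trace_randicMatrix_sq (hn : 0 < n) :
    (randicMatrix (dutchWindmillGraph n) ^ 2).trace = n + 1 := by
  have hr : 0 < (n : ℝ) := by exact_mod_cast hn
  simp only [trace, diag_apply, Fintype.sum_option, randicMatrix_sq_none_none hn, one_div,
    Fintype.sum_prod_type, randicMatrix_sq_some_some, Fin.isValue, and_true, _root_.mul_inv_rev,
    ↓reduceIte, Fin.sum_univ_three, Fin.reduceEq, Finset.sum_const, Finset.card_univ,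
    Fintype.card_fin, smul_add, nsmul_eq_mul]
  field_simp
  ring

lemma trace_randicMatrix_pow_four (hn : 0 < n) :
    (randicMatrix (dutchWindmillGraph n) ^ 4).trace = (n + 3) / 2 := by
  have hr : 0 < √n := Real.sqrt_pos.mpr (by exact_mod_cast hn)
  rw [show 4 = 2 + 2 from rfl, pow_add]
  simp only [trace, diag_apply, mul_apply, Fintype.sum_option, Fintype.sum_prod_type,
    Fin.sum_univ_three, Fin.isValue, Finset.sum_add_distrib, randicMatrix_sq_none_none hn, one_div,
    randicMatrix_sq_some_none, _root_.mul_inv_rev, randicMatrix_sq_none_some, mul_ite, ite_mul,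
    zero_mul, mul_zero, Finset.sum_ite_eq', Finset.mem_univ, ↓reduceIte, Finset.sum_const,
    Finset.card_univ, Fintype.card_fin, nsmul_eq_mul, Fin.reduceEq,
    randicMatrix_sq_some_some, false_and, mul_add, add_mul, Finset.sum_ite_irrel, Finset.sum_ite_eq,
    add_zero, zero_add, true_and]
  field_simp
  rw [Real.sq_sqrt (Nat.cast_nonneg n)]
  ring

end dutchWindmillGraph

theorem stmt10 (n : ℕ) (hn : 2 ≤ n) :
    randicEnergy (dutchWindmillGraph n) = 2 + ((n : ℝ) - 1) * Real.sqrt 2 := by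
  have hn0 : 0 < n := by omega
  set R := randicMatrix (dutchWindmillGraph n)
  have hR : R.IsHermitian := SimpleGraph.isHermitian_randicMatrix_s10 _
  have hroot (i) : hR.eigenvalues i ^ 2 * (hR.eigenvalues i ^ 2 - 1) *
      (2 * hR.eigenvalues i ^ 2 - 1) = 0 := by
    obtain ⟨v, hv0, hv⟩ := hR.exists_mulVec_eq_smul_eigenvalues i
    exact dutchWindmillGraph.sq_mul_sq_sub_one_mul_eq_zero_of_mulVec_eq_smul hn0 hv hv0
  calc randicEnergy (dutchWindmillGraph n)
      = ∑ i, ((2 * √2 - 1) * hR.eigenvalues i ^ 2 + (2 - 2 * √2) * hR.eigenvalues i ^ 4) := by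
        rw [randicEnergy_eq_sum_abs_eigenvalues]
        exact Finset.sum_congr rfl fun i _ => abs_eq_of_sq_mul_sq_sub_one_mul_eq_zero (hroot i)
    _ = (2 * √2 - 1) * (R ^ 2).trace + (2 - 2 * √2) * (R ^ 4).trace := by
        simp only [hR.trace_pow_eq_sum_eigenvalues_pow, RCLike.ofReal_real_eq_id, id,
          Finset.mul_sum, Finset.sum_add_distrib]
    _ = 2 + ((n : ℝ) - 1) * √2 := by
        rw [dutchWindmillGraph.trace_randicMatrix_sq hn0,
          dutchWindmillGraph.trace_randicMatrix_pow_four hn0]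
        ring
end
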